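/- arXiv:2111.09903 — 4 statements merged into one kernel-verified Lean document; each statement's English description precedes it below -/
import Mathlib

section
/- Let r₀ > 0, let Z₀ : ℝ → ℝ be differentiable, and let f : ℝ → ℝ be differentiable. Define F(r,t) = f(r³ + 3 Z₀(t) r₀²)/r² for r > 0, t ∈ ℝ. Then F satisfies the transport equation ∂F/∂t(r,t) − Z₀'(t) (r₀²/r²) ∂F/∂r(r,t) = 2 Z₀'(t) (r₀²/r³) F(r,t) for all r > 0 and t ∈ ℝ. (This is the general solution of the evolution equation for the radial elastic deformation component F_e,rr in the spherical accretion problem.) -/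
/-!
The quantity `ξ = r³ + 3 Z₀(t) r₀²` is constant along the characteristics `ṙ = -Ż₀ r₀²/r²`
of the transport operator `∂ₜ − Ż₀ (r₀²/r²) ∂ᵣ`: its time derivative `3 Ż₀ r₀²` cancels
against `Ż₀ (r₀²/r²) · 3r²`. Hence every `f(ξ)` is annihilated by the operator, and the
factor `r⁻²` contributes exactly the source term `2 Ż₀ (r₀²/r³) F`.
-/

theorem hasDerivAt_comp_accretion_time {Z₀ f : ℝ → ℝ} {r r₀ t : ℝ}
    (hZ : DifferentiableAt ℝ Z₀ t) (hf : DifferentiableAt ℝ f (r ^ 3 + 3 * Z₀ t * r₀ ^ 2)) :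
    HasDerivAt (fun s => f (r ^ 3 + 3 * Z₀ s * r₀ ^ 2) / r ^ 2)
      (deriv f (r ^ 3 + 3 * Z₀ t * r₀ ^ 2) * (3 * deriv Z₀ t * r₀ ^ 2) / r ^ 2) t := by
  have hξ : HasDerivAt (fun s => r ^ 3 + 3 * Z₀ s * r₀ ^ 2) (3 * deriv Z₀ t * r₀ ^ 2) t := by
    simpa using ((hZ.hasDerivAt.const_mul 3).mul_const (r₀ ^ 2)).const_add (r ^ 3)
  exact (hf.hasDerivAt.comp t hξ).div_const _

theorem hasDerivAt_comp_cube_add_div_sq {f : ℝ → ℝ} {r c : ℝ} (hr : r ≠ 0)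
    (hf : DifferentiableAt ℝ f (r ^ 3 + c)) :
    HasDerivAt (fun x => f (x ^ 3 + c) / x ^ 2)
      (3 * deriv f (r ^ 3 + c) - 2 * f (r ^ 3 + c) / r ^ 3) r := by
  have hξ : HasDerivAt (fun x : ℝ => x ^ 3 + c) (3 * r ^ 2) r := by
    simpa using (hasDerivAt_pow 3 r).add_const c
  have hsq : HasDerivAt (fun x : ℝ => x ^ 2) (2 * r) r := by
    simpa using hasDerivAt_pow 2 r
  refine ((hf.hasDerivAt.comp r hξ).div hsq (pow_ne_zero 2 hr)).congr_deriv ?_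
  rw [Function.comp_apply]
  field_simp

theorem spherical_accretion_Frr_general_solution_general
    (r₀ : ℝ)
    (Z₀ f : ℝ → ℝ) (hZ : Differentiable ℝ Z₀) (hf : Differentiable ℝ f)
    (F : ℝ → ℝ → ℝ)
    (hF : F = fun r t => f (r ^ 3 + 3 * Z₀ t * r₀ ^ 2) / r ^ 2) :
    ∀ r > (0 : ℝ), ∀ t : ℝ,
      deriv (fun s => F r s) t
        - deriv Z₀ t * (r₀ ^ 2 / r ^ 2) * deriv (fun x => F x t) r
        = 2 * deriv Z₀ t * (r₀ ^ 2 / r ^ 3) * F r t := by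
  intro r hr t
  subst hF
  rw [(hasDerivAt_comp_accretion_time (hZ t) (hf _)).deriv,
    (hasDerivAt_comp_cube_add_div_sq hr.ne' (hf _)).deriv]
  field_simp
  ring

/-- The general solution `F(r,t) = f(r³ + 3 Z₀(t) r₀²)/r²` satisfies the transport
equation `∂F/∂t − Ż₀ (r₀²/r²) ∂F/∂r = 2 Ż₀ (r₀²/r³) F` governing the radial elastic
deformation component `F_e,rr` in the spherical accretion problem. -/
theorem spherical_accretion_Frr_general_solution
    (r₀ : ℝ) (hr₀ : 0 < r₀)
    (Z₀ f : ℝ → ℝ) (hZ : Differentiable ℝ Z₀) (hf : Differentiable ℝ f)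
    (F : ℝ → ℝ → ℝ)
    (hF : F = fun r t => f (r ^ 3 + 3 * Z₀ t * r₀ ^ 2) / r ^ 2) :
    ∀ r > (0 : ℝ), ∀ t : ℝ,
      deriv (fun s => F r s) t
        - deriv Z₀ t * (r₀ ^ 2 / r ^ 2) * deriv (fun x => F x t) r
        = 2 * deriv Z₀ t * (r₀ ^ 2 / r ^ 3) * F r t :=
  spherical_accretion_Frr_general_solution_general r₀ Z₀ f hZ hf F hF
end

section
/- Let r₀ > 0, let Z₀ : ℝ → ℝ be differentiable, and let g : ℝ → ℝ be differentiable. Define F(r,t) = r · g(r³ + 3 Z₀(t) r₀²) for r > 0, t ∈ ℝ. Then F satisfies the transport equation ∂F/∂t(r,t) − Z₀'(t) (r₀²/r²) ∂F/∂r(r,t) = −Z₀'(t) (r₀²/r³) F(r,t) for all r > 0 and t ∈ ℝ. (This is the general solution of the evolution equation for the hoop elastic deformation component F_e,θθ in the spherical accretion problem.) -/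
/-!
The quantity `ξ(r,t) = r³ + 3 Z₀(t) r₀²` is constant along the characteristics
`ṙ = -Ż₀ r₀²/r²` of the transport operator `∂ₜ - c ∂ᵣ`, `c = Ż₀ r₀²/r²`. Hence the operator
kills `g ∘ ξ`, and on `F = r · g(ξ)` only the derivative of the prefactor `r` survives, giving
`-c · g(ξ) = -(c/r) F`.
-/

def accretionInvariant (r₀ : ℝ) (Z₀ : ℝ → ℝ) (r t : ℝ) : ℝ :=
  r ^ 3 + 3 * Z₀ t * r₀ ^ 2

theorem deriv_transport_mul_comp_of_invariant {ξ : ℝ → ℝ → ℝ} {g : ℝ → ℝ} {r t c ξt ξr : ℝ}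
    (hξt : HasDerivAt (fun s => ξ r s) ξt t) (hξr : HasDerivAt (fun x => ξ x t) ξr r)
    (hg : DifferentiableAt ℝ g (ξ r t)) (hinv : ξt = c * ξr) :
    deriv (fun s => r * g (ξ r s)) t - c * deriv (fun x => x * g (ξ x t)) r
      = -c * g (ξ r t) := by
  have hFt : HasDerivAt (fun s => r * g (ξ r s)) (r * (deriv g (ξ r t) * ξt)) t :=
    (hg.hasDerivAt.comp t hξt).const_mul r
  have hFr : HasDerivAt (fun x => x * g (ξ x t)) (1 * g (ξ r t) + r * (deriv g (ξ r t) * ξr)) r :=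
    (hasDerivAt_id r).mul (hg.hasDerivAt.comp r hξr)
  rw [hFt.deriv, hFr.deriv, hinv]
  ring

theorem hasDerivAt_accretionInvariant_time (r₀ : ℝ) {Z₀ : ℝ → ℝ} {t : ℝ}
    (hZ : DifferentiableAt ℝ Z₀ t) (r : ℝ) :
    HasDerivAt (fun s => accretionInvariant r₀ Z₀ r s) (3 * deriv Z₀ t * r₀ ^ 2) t :=
  ((hZ.hasDerivAt.const_mul 3).mul_const (r₀ ^ 2)).const_add (r ^ 3)

theorem hasDerivAt_accretionInvariant_radius (r₀ : ℝ) (Z₀ : ℝ → ℝ) (r t : ℝ) :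
    HasDerivAt (fun x => accretionInvariant r₀ Z₀ x t) (3 * r ^ 2) r :=
  ((hasDerivAt_pow 3 r).add_const (3 * Z₀ t * r₀ ^ 2)).congr_deriv (by norm_num)

theorem spherical_accretion_Ftt_general_solution_general
    (r₀ : ℝ)
    (Z₀ g : ℝ → ℝ) (hZ : Differentiable ℝ Z₀) (hg : Differentiable ℝ g)
    (F : ℝ → ℝ → ℝ)
    (hF : F = fun r t => r * g (r ^ 3 + 3 * Z₀ t * r₀ ^ 2)) :
    ∀ r > (0 : ℝ), ∀ t : ℝ,
      deriv (fun s => F r s) t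
        - deriv Z₀ t * (r₀ ^ 2 / r ^ 2) * deriv (fun x => F x t) r
        = -(deriv Z₀ t) * (r₀ ^ 2 / r ^ 3) * F r t := by
  obtain rfl : F = fun r t => r * g (accretionInvariant r₀ Z₀ r t) := hF
  intro r hr t
  beta_reduce
  have hr2 : r ^ 2 ≠ 0 := pow_ne_zero 2 hr.ne'
  have hinv : 3 * deriv Z₀ t * r₀ ^ 2 = deriv Z₀ t * (r₀ ^ 2 / r ^ 2) * (3 * r ^ 2) := by
    field_simp
  have hrhs : -(deriv Z₀ t) * (r₀ ^ 2 / r ^ 3) * (r * g (accretionInvariant r₀ Z₀ r t))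
      = -(deriv Z₀ t * (r₀ ^ 2 / r ^ 2)) * g (accretionInvariant r₀ Z₀ r t) := by
    field_simp
  rw [hrhs]
  exact deriv_transport_mul_comp_of_invariant (hasDerivAt_accretionInvariant_time r₀ (hZ t) r)
    (hasDerivAt_accretionInvariant_radius r₀ Z₀ r t) hg.differentiableAt hinv

/-- The general solution `F(r,t) = r · g(r³ + 3 Z₀(t) r₀²)` satisfies the transport
equation `∂F/∂t − Ż₀ (r₀²/r²) ∂F/∂r = −Ż₀ (r₀²/r³) F` governing the hoop elastic
deformation component `F_e,θθ` in the spherical accretion problem. -/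
theorem spherical_accretion_Ftt_general_solution
    (r₀ : ℝ) (hr₀ : 0 < r₀)
    (Z₀ g : ℝ → ℝ) (hZ : Differentiable ℝ Z₀) (hg : Differentiable ℝ g)
    (F : ℝ → ℝ → ℝ)
    (hF : F = fun r t => r * g (r ^ 3 + 3 * Z₀ t * r₀ ^ 2)) :
    ∀ r > (0 : ℝ), ∀ t : ℝ,
      deriv (fun s => F r s) t
        - deriv Z₀ t * (r₀ ^ 2 / r ^ 2) * deriv (fun x => F x t) r
        = -(deriv Z₀ t) * (r₀ ^ 2 / r ^ 3) * F r t :=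
  spherical_accretion_Ftt_general_solution_general r₀ Z₀ g hZ hg F hF
end

section
/- Let r₀ > 0, let Z₀ : ℝ → ℝ be differentiable with Z₀(0) = 0, and let F₀ : (0,∞) → ℝ be differentiable. Define F(r,t) = (r³ + 3 Z₀(t) r₀²)^{2/3} · F₀((r³ + 3 Z₀(t) r₀²)^{1/3}) / r² on the region D = {(r,t) : r > 0, r³ + 3 Z₀(t) r₀² > 0}. Then F satisfies ∂F/∂t − Z₀'(t)(r₀²/r²) ∂F/∂r = 2 Z₀'(t)(r₀²/r³) F on D, together with the initial condition F(r,0) = F₀(r) for all r > 0. (This is the solution of the F_e,rr transport equation in the part of the body occupied by the initial material.) -/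
/-!
Along the characteristics of the transport operator `∂ₜ − Ż₀ (r₀²/r²) ∂ᵣ` the quantity
`u = r³ + 3 Z₀(t) r₀²` (the cube of the Lagrangian radius) is constant. Hence for any profile `G`,
the field `G(u)/r²` is hit by the operator only through the factor `r⁻²`, whose radial derivative
`−2/r³` produces exactly the right-hand side `2 Ż₀ (r₀²/r³) F`. The solution is the case
`G(u) = u^(2/3) F₀(u^(1/3))`, and at `t = 0` we have `u = r³`.
-/

theorem transport_div_sq_of_lagrangian {r₀ r t : ℝ} {Z₀ G : ℝ → ℝ}
    (hZ : DifferentiableAt ℝ Z₀ t) (hG : DifferentiableAt ℝ G (r ^ 3 + 3 * Z₀ t * r₀ ^ 2))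
    (hr : r ≠ 0) :
    deriv (fun s => G (r ^ 3 + 3 * Z₀ s * r₀ ^ 2) / r ^ 2) t
        - deriv Z₀ t * (r₀ ^ 2 / r ^ 2) * deriv (fun x => G (x ^ 3 + 3 * Z₀ t * r₀ ^ 2) / x ^ 2) r
      = 2 * deriv Z₀ t * (r₀ ^ 2 / r ^ 3) * (G (r ^ 3 + 3 * Z₀ t * r₀ ^ 2) / r ^ 2) := by
  have hu_time : HasDerivAt (fun s => r ^ 3 + 3 * Z₀ s * r₀ ^ 2) (3 * deriv Z₀ t * r₀ ^ 2) t :=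
    ((hZ.hasDerivAt.const_mul 3).mul_const (r₀ ^ 2)).const_add (r ^ 3)
  have hu_radius : HasDerivAt (fun x => x ^ 3 + 3 * Z₀ t * r₀ ^ 2) (3 * r ^ 2) r := by
    simpa using (hasDerivAt_pow 3 r).add_const (3 * Z₀ t * r₀ ^ 2)
  have hsq : HasDerivAt (fun x : ℝ => x ^ 2) (2 * r) r := by
    simpa using hasDerivAt_pow 2 r
  have hF_time : HasDerivAt (fun s => G (r ^ 3 + 3 * Z₀ s * r₀ ^ 2) / r ^ 2)
      (deriv G (r ^ 3 + 3 * Z₀ t * r₀ ^ 2) * (3 * deriv Z₀ t * r₀ ^ 2) / r ^ 2) t :=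
    (hG.hasDerivAt.comp t hu_time).div_const _
  have hF_radius : HasDerivAt (fun x => G (x ^ 3 + 3 * Z₀ t * r₀ ^ 2) / x ^ 2)
      ((deriv G (r ^ 3 + 3 * Z₀ t * r₀ ^ 2) * (3 * r ^ 2) * r ^ 2
        - G (r ^ 3 + 3 * Z₀ t * r₀ ^ 2) * (2 * r)) / (r ^ 2) ^ 2) r :=
    (hG.hasDerivAt.comp r hu_radius).div hsq (pow_ne_zero 2 hr)
  rw [hF_time.deriv, hF_radius.deriv]
  field_simp
  ring

theorem Real.pow_three_rpow_div_three {r : ℝ} (hr : 0 ≤ r) (a : ℝ) :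
    (r ^ 3) ^ (a / 3) = r ^ a := by
  rw [← Real.rpow_natCast, ← Real.rpow_mul hr]
  congr 1
  ring

theorem differentiableAt_rpow_two_thirds_mul_comp_cbrt {F₀ : ℝ → ℝ} {u : ℝ} (hu : 0 < u)
    (hF₀ : DifferentiableAt ℝ F₀ (u ^ ((1 : ℝ) / 3))) :
    DifferentiableAt ℝ (fun x : ℝ => x ^ ((2 : ℝ) / 3) * F₀ (x ^ ((1 : ℝ) / 3))) u :=
  (Real.differentiableAt_rpow_const_of_ne _ hu.ne').mul
    (hF₀.comp u (Real.differentiableAt_rpow_const_of_ne _ hu.ne'))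

theorem spherical_accretion_Frr_initial_region_general
    (r₀ : ℝ)
    (Z₀ : ℝ → ℝ) (hZ : Differentiable ℝ Z₀) (hZ0 : Z₀ 0 = 0)
    (F₀ : ℝ → ℝ) (hF₀ : ∀ s > (0 : ℝ), DifferentiableAt ℝ F₀ s)
    (F : ℝ → ℝ → ℝ)
    (hF : F = fun r t => (r ^ 3 + 3 * Z₀ t * r₀ ^ 2) ^ ((2 : ℝ) / 3)
        * F₀ ((r ^ 3 + 3 * Z₀ t * r₀ ^ 2) ^ ((1 : ℝ) / 3)) / r ^ 2) :
    (∀ r t : ℝ, 0 < r → 0 < r ^ 3 + 3 * Z₀ t * r₀ ^ 2 →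
      deriv (fun s => F r s) t
        - deriv Z₀ t * (r₀ ^ 2 / r ^ 2) * deriv (fun x => F x t) r
        = 2 * deriv Z₀ t * (r₀ ^ 2 / r ^ 3) * F r t)
    ∧ (∀ r > (0 : ℝ), F r 0 = F₀ r) := by
  subst hF
  refine ⟨fun r t hr hu => ?_, fun r hr => ?_⟩
  · exact transport_div_sq_of_lagrangian (hZ t)
      (differentiableAt_rpow_two_thirds_mul_comp_cbrt hu (hF₀ _ (by positivity))) hr.ne'
  · simp only [hZ0, mul_zero, zero_mul, add_zero, Real.pow_three_rpow_div_three hr.le,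
      Real.rpow_one, Real.rpow_two]
    field_simp

/-- In the spherical accretion problem, the field
`F(r,t) = (r³ + 3 Z₀(t) r₀²)^(2/3) · F₀((r³ + 3 Z₀(t) r₀²)^(1/3)) / r²`
satisfies the transport equation `∂F/∂t − Ż₀(r₀²/r²) ∂F/∂r = 2 Ż₀(r₀²/r³) F`
on the region `{(r,t) : r > 0, r³ + 3 Z₀(t) r₀² > 0}`, together with the initial
condition `F(r,0) = F₀(r)` (the solution in the part occupied by initial material). -/
theorem spherical_accretion_Frr_initial_region
    (r₀ : ℝ) (hr₀ : 0 < r₀)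
    (Z₀ : ℝ → ℝ) (hZ : Differentiable ℝ Z₀) (hZ0 : Z₀ 0 = 0)
    (F₀ : ℝ → ℝ) (hF₀ : ∀ s > (0 : ℝ), DifferentiableAt ℝ F₀ s)
    (F : ℝ → ℝ → ℝ)
    (hF : F = fun r t => (r ^ 3 + 3 * Z₀ t * r₀ ^ 2) ^ ((2 : ℝ) / 3)
        * F₀ ((r ^ 3 + 3 * Z₀ t * r₀ ^ 2) ^ ((1 : ℝ) / 3)) / r ^ 2) :
    (∀ r t : ℝ, 0 < r → 0 < r ^ 3 + 3 * Z₀ t * r₀ ^ 2 →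
      deriv (fun s => F r s) t
        - deriv Z₀ t * (r₀ ^ 2 / r ^ 2) * deriv (fun x => F x t) r
        = 2 * deriv Z₀ t * (r₀ ^ 2 / r ^ 3) * F r t)
    ∧ (∀ r > (0 : ℝ), F r 0 = F₀ r) :=
  spherical_accretion_Frr_initial_region_general r₀ Z₀ hZ hZ0 F₀ hF₀ F hF
end

section
/- Let R₀ > 0 and let a : ℝ → (0,∞) be differentiable with a(0) = R₀. On the region D = {(r,t) : r > 0, R₀² − a(t)² + r² > 0}, define F(r,t) = √(R₀² − a(t)² + r²)/r and H(r,t) = r/√(R₀² − a(t)² + r²). Then F satisfies ∂F/∂t + (a a'/r) ∂F/∂r = −(a a'/r²) F on D, H satisfies ∂H/∂t + (a a'/r) ∂H/∂r = (a a'/r²) H on D, and F(r,0) = H(r,0) = 1 for all r > 0. (These are the elastic deformation components F_e,rr and F_e,θθ of the initially present, initially stress-free material of the cylinder.) -/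
/-!
The reference radius `ρ(r, t) = √(R₀² − a(t)² + r²)` is the Lagrangian label of the material point
at radius `r`: along the flow `ṙ = a ȧ / r` one has `d(r²)/dt = d(a²)/dt`, so `ρ` is constant on
characteristics. The transport operator `∂ₜ + (a ȧ / r) ∂ᵣ` is a derivation sending `r` to `a ȧ / r`
and `ρ` to `0`, which gives the equations for `F = ρ / r` and `H = r / ρ` by the quotient rule.
-/

section Transport

variable {ρ : ℝ → ℝ → ℝ} {k r t ρr ρt : ℝ}

theorem transport_div_radius (hr : r ≠ 0) (hρr : HasDerivAt (fun x => ρ x t) ρr r)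
    (hρt : HasDerivAt (fun s => ρ r s) ρt t) (htransport : ρt + k / r * ρr = 0) :
    deriv (fun s => ρ r s / r) t + k / r * deriv (fun x => ρ x t / x) r
      = -(k / r ^ 2) * (ρ r t / r) := by
  have hFr : HasDerivAt (fun x => ρ x t / x) ((ρr * r - ρ r t * 1) / r ^ 2) r :=
    hρr.div (hasDerivAt_id r) hr
  rw [(hρt.div_const r).deriv, hFr.deriv]
  linear_combination (norm := (field_simp; ring)) htransport / r

theorem transport_radius_div (hr : r ≠ 0) (hρ0 : ρ r t ≠ 0)
    (hρr : HasDerivAt (fun x => ρ x t) ρr r) (hρt : HasDerivAt (fun s => ρ r s) ρt t)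
    (htransport : ρt + k / r * ρr = 0) :
    deriv (fun s => r / ρ r s) t + k / r * deriv (fun x => x / ρ x t) r
      = k / r ^ 2 * (r / ρ r t) := by
  have hHt : HasDerivAt (fun s => r / ρ r s) ((0 * ρ r t - r * ρt) / ρ r t ^ 2) t :=
    (hasDerivAt_const t r).div hρt hρ0
  have hHr : HasDerivAt (fun x => x / ρ x t) ((1 * ρ r t - r * ρr) / ρ r t ^ 2) r :=
    (hasDerivAt_id r).div hρr hρ0
  rw [hHt.deriv, hHr.deriv]
  linear_combination (norm := (field_simp; ring)) -(r * htransport / ρ r t ^ 2)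

end Transport

section ReferenceRadius

variable {c : ℝ → ℝ} {k r t : ℝ}

theorem hasDerivAt_sqrt_add_sq_radius (hq : 0 < c t + r ^ 2) :
    HasDerivAt (fun x => √(c t + x ^ 2)) (r / √(c t + r ^ 2)) r := by
  convert ((hasDerivAt_pow 2 r).const_add (c t)).sqrt hq.ne' using 1
  field_simp
  ring

theorem hasDerivAt_sqrt_add_sq_time (hc : HasDerivAt c (-(2 * k)) t) (hq : 0 < c t + r ^ 2) :
    HasDerivAt (fun s => √(c s + r ^ 2)) (-k / √(c t + r ^ 2)) t := by
  convert (hc.add_const (r ^ 2)).sqrt hq.ne' using 1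
  field_simp

theorem sqrt_add_sq_div_radius_transport (hc : HasDerivAt c (-(2 * k)) t) (hr : r ≠ 0)
    (hq : 0 < c t + r ^ 2) :
    deriv (fun s => √(c s + r ^ 2) / r) t + k / r * deriv (fun x => √(c t + x ^ 2) / x) r
      = -(k / r ^ 2) * (√(c t + r ^ 2) / r) :=
  transport_div_radius (ρ := fun x s => √(c s + x ^ 2)) hr
    (hasDerivAt_sqrt_add_sq_radius hq) (hasDerivAt_sqrt_add_sq_time hc hq) (by field_simp; ring)

theorem radius_div_sqrt_add_sq_transport (hc : HasDerivAt c (-(2 * k)) t) (hr : r ≠ 0)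
    (hq : 0 < c t + r ^ 2) :
    deriv (fun s => r / √(c s + r ^ 2)) t + k / r * deriv (fun x => x / √(c t + x ^ 2)) r
      = k / r ^ 2 * (r / √(c t + r ^ 2)) :=
  transport_radius_div (ρ := fun x s => √(c s + x ^ 2)) hr (Real.sqrt_pos.mpr hq).ne'
    (hasDerivAt_sqrt_add_sq_radius hq) (hasDerivAt_sqrt_add_sq_time hc hq) (by field_simp; ring)

end ReferenceRadius

theorem cylindrical_accretion_initial_region_general
    (R₀ : ℝ)
    (a : ℝ → ℝ) (ha : Differentiable ℝ a) (ha0 : a 0 = R₀)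
    (F H : ℝ → ℝ → ℝ)
    (hF : F = fun r t => Real.sqrt (R₀ ^ 2 - a t ^ 2 + r ^ 2) / r)
    (hH : H = fun r t => r / Real.sqrt (R₀ ^ 2 - a t ^ 2 + r ^ 2)) :
    (∀ r t : ℝ, 0 < r → 0 < R₀ ^ 2 - a t ^ 2 + r ^ 2 →
      deriv (fun s => F r s) t
        + a t * deriv a t / r * deriv (fun x => F x t) r
        = -(a t * deriv a t / r ^ 2) * F r t)
    ∧ (∀ r t : ℝ, 0 < r → 0 < R₀ ^ 2 - a t ^ 2 + r ^ 2 →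
      deriv (fun s => H r s) t
        + a t * deriv a t / r * deriv (fun x => H x t) r
        = a t * deriv a t / r ^ 2 * H r t)
    ∧ (∀ r > (0 : ℝ), F r 0 = 1 ∧ H r 0 = 1) := by
  subst hF hH
  have hc (t : ℝ) : HasDerivAt (fun s => R₀ ^ 2 - a s ^ 2) (-(2 * (a t * deriv a t))) t :=
    (((ha t).hasDerivAt.pow 2).const_sub (R₀ ^ 2)).congr_deriv (by push_cast; ring)
  refine ⟨fun r t hr hq => ?_, fun r t hr hq => ?_, fun r hr => ?_⟩
  · exact sqrt_add_sq_div_radius_transport (hc t) hr.ne' hq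
  · exact radius_div_sqrt_add_sq_transport (hc t) hr.ne' hq
  · simp [ha0, Real.sqrt_sq hr.le, hr.ne']

/-- In the cylindrical accretion problem, the elastic deformation components of the
initially present, initially stress-free material,
`F(r,t) = √(R₀² − a(t)² + r²)/r` and `H(r,t) = r/√(R₀² − a(t)² + r²)`,
satisfy their respective transport equations on the region
`{(r,t) : r > 0, R₀² − a(t)² + r² > 0}`, with initial conditions `F(r,0) = H(r,0) = 1`. -/
theorem cylindrical_accretion_initial_region
    (R₀ : ℝ) (hR₀ : 0 < R₀)
    (a : ℝ → ℝ) (ha : Differentiable ℝ a) (hapos : ∀ t : ℝ, 0 < a t) (ha0 : a 0 = R₀)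
    (F H : ℝ → ℝ → ℝ)
    (hF : F = fun r t => Real.sqrt (R₀ ^ 2 - a t ^ 2 + r ^ 2) / r)
    (hH : H = fun r t => r / Real.sqrt (R₀ ^ 2 - a t ^ 2 + r ^ 2)) :
    (∀ r t : ℝ, 0 < r → 0 < R₀ ^ 2 - a t ^ 2 + r ^ 2 →
      deriv (fun s => F r s) t
        + a t * deriv a t / r * deriv (fun x => F x t) r
        = -(a t * deriv a t / r ^ 2) * F r t)
    ∧ (∀ r t : ℝ, 0 < r → 0 < R₀ ^ 2 - a t ^ 2 + r ^ 2 →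
      deriv (fun s => H r s) t
        + a t * deriv a t / r * deriv (fun x => H x t) r
        = a t * deriv a t / r ^ 2 * H r t)
    ∧ (∀ r > (0 : ℝ), F r 0 = 1 ∧ H r 0 = 1) :=
  cylindrical_accretion_initial_region_general R₀ a ha ha0 F H hF hH
end
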